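/- arXiv:2510.07199 — 4 statements merged into one kernel-verified Lean document; each statement's English description precedes it below -/
import Mathlib

section
/- For the Poisson model with smooth prior, the derivative of the posterior mean of η = log x with respect to the (continuously extended) observation y equals the posterior variance of log x: d/dy E[log x | y] = E[(log x)² | y] − (E[log x | y])² = Var[log x | y]. -/
/-!
In `t`, the likelihood `plik x t` has logarithmic derivative `log x - ψ(t + 1)`. Hence the numerator
`N = ∫ log x · plik · p` and the marginal `M = ∫ plik · p` of the posterior mean satisfy
`N' = S₂ - ψ N` and `M' = N - ψ M` with `S₂ = ∫ log² x · plik · p`, and in the quotient rule for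
`N / M` the `ψ` terms cancel, leaving `S₂ / M - (N / M)²`. Expanding the square shows that this is
the centred second moment.
-/

open MeasureTheory Set

/-- digamma function ψ = (log Γ)' -/
noncomputable def digamma (t : ℝ) : ℝ := deriv (fun s => Real.log (Real.Gamma s)) t

/-- Poisson likelihood continuously extended to real observations. -/
noncomputable def plik (x y : ℝ) : ℝ := x ^ y * Real.exp (-x) / Real.Gamma (y + 1)

/-- marginal density of the observation -/
noncomputable def marg (px : ℝ → ℝ) (t : ℝ) : ℝ := ∫ x in Set.Ioi (0:ℝ), plik x t * px x

/-- posterior expectation E[f(x) | y = t] -/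
noncomputable def postExp (px : ℝ → ℝ) (f : ℝ → ℝ) (t : ℝ) : ℝ :=
  (∫ x in Set.Ioi (0:ℝ), f x * plik x t * px x) / marg px t

/-- k-th posterior central moment of log x -/
noncomputable def cmom (px : ℝ → ℝ) (k : ℕ) (t : ℝ) : ℝ :=
  (∫ x in Set.Ioi (0:ℝ), (Real.log x - postExp px Real.log t) ^ k * plik x t * px x) / marg px t

section WeightedMoments

variable {α : Type*} [MeasurableSpace α] {μ : Measure α} {g w : α → ℝ}

theorem integral_sub_const_mul (hw : Integrable w μ)
    (hgw : Integrable (fun x => g x * w x) μ) (c : ℝ) :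
    ∫ x, (g x - c) * w x ∂μ = ∫ x, g x * w x ∂μ - c * ∫ x, w x ∂μ := by
  simp only [sub_mul]
  rw [integral_sub hgw (hw.const_mul c), integral_const_mul]

theorem integral_sub_const_sq_mul (hw : Integrable w μ)
    (hgw : Integrable (fun x => g x * w x) μ) (hg2w : Integrable (fun x => g x ^ 2 * w x) μ)
    (c : ℝ) :
    ∫ x, (g x - c) ^ 2 * w x ∂μ
      = ∫ x, g x ^ 2 * w x ∂μ - 2 * c * ∫ x, g x * w x ∂μ + c ^ 2 * ∫ x, w x ∂μ := by
  have hexpand : (fun x => (g x - c) ^ 2 * w x)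
      = fun x => g x ^ 2 * w x - 2 * c * (g x * w x) + c ^ 2 * w x := by
    funext x; ring
  rw [hexpand, integral_add (f := fun x => g x ^ 2 * w x - 2 * c * (g x * w x))
    (hg2w.sub (hgw.const_mul (2 * c))) (hw.const_mul (c ^ 2)),
    integral_sub hg2w (hgw.const_mul (2 * c)), integral_const_mul, integral_const_mul]

theorem integral_sub_mean_sq_mul_div (hw : Integrable w μ)
    (hgw : Integrable (fun x => g x * w x) μ) (hg2w : Integrable (fun x => g x ^ 2 * w x) μ)
    (hw0 : ∫ x, w x ∂μ ≠ 0) :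
    (∫ x, (g x - (∫ x, g x * w x ∂μ) / ∫ x, w x ∂μ) ^ 2 * w x ∂μ) / ∫ x, w x ∂μ
      = (∫ x, g x ^ 2 * w x ∂μ) / (∫ x, w x ∂μ)
        - ((∫ x, g x * w x ∂μ) / ∫ x, w x ∂μ) ^ 2 := by
  rw [integral_sub_const_sq_mul hw hgw hg2w]
  field_simp
  ring

end WeightedMoments

theorem HasDerivAt.div_of_shifted_derivs {N M : ℝ → ℝ} {y c ψ : ℝ}
    (hN : HasDerivAt N (c - ψ * N y) y) (hM : HasDerivAt M (N y - ψ * M y) y) (hM0 : M y ≠ 0) :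
    HasDerivAt (fun t => N t / M t) (c / M y - (N y / M y) ^ 2) y := by
  refine (hN.div hM hM0).congr_deriv ?_
  field_simp
  ring

theorem poisson_posterior_mean_deriv_eq_variance_general (px : ℝ → ℝ)
    (y : ℝ)
    (hpos : 0 < marg px y)
    (hint0 : IntegrableOn (fun x => plik x y * px x) (Set.Ioi 0))
    (hint1 : IntegrableOn (fun x => Real.log x * plik x y * px x) (Set.Ioi 0))
    (hint2 : IntegrableOn (fun x => (Real.log x) ^ 2 * plik x y * px x) (Set.Ioi 0))
    -- differentiation under the integral sign for the marginal:
    (hmargD : HasDerivAt (marg px)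
      (∫ x in Set.Ioi (0:ℝ), (Real.log x - digamma (y + 1)) * plik x y * px x) y)
    -- differentiation under the integral sign for the numerator:
    (hND : HasDerivAt (fun t => ∫ x in Set.Ioi (0:ℝ), Real.log x * plik x t * px x)
      (∫ x in Set.Ioi (0:ℝ),
        Real.log x * (Real.log x - digamma (y + 1)) * plik x y * px x) y) :
    HasDerivAt (postExp px Real.log)
      (postExp px (fun x => (Real.log x) ^ 2) y - (postExp px Real.log y) ^ 2) y ∧
    postExp px (fun x => (Real.log x) ^ 2) y - (postExp px Real.log y) ^ 2
      = cmom px 2 y := by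
  simp only [mul_assoc] at hint1 hint2
  have hint2' : IntegrableOn (fun x => Real.log x * (Real.log x * (plik x y * px x))) (Ioi 0) := by
    simpa only [pow_two, mul_assoc] using hint2
  have hmarg : HasDerivAt (marg px)
      ((∫ x in Ioi (0:ℝ), Real.log x * plik x y * px x) - digamma (y + 1) * marg px y) y := by
    convert hmargD using 1
    simpa only [mul_assoc, marg] using
      (integral_sub_const_mul hint0 hint1 (digamma (y + 1))).symm
  have hnum : HasDerivAt (fun t => ∫ x in Ioi (0:ℝ), Real.log x * plik x t * px x)
      ((∫ x in Ioi (0:ℝ), Real.log x ^ 2 * plik x y * px x)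
        - digamma (y + 1) * ∫ x in Ioi (0:ℝ), Real.log x * plik x y * px x) y := by
    convert hND using 1
    simpa only [pow_two, mul_assoc, mul_left_comm (Real.log _) (Real.log _ - _)] using
      (integral_sub_const_mul hint1 hint2' (digamma (y + 1))).symm
  refine ⟨hnum.div_of_shifted_derivs hmarg hpos.ne', ?_⟩
  simpa only [cmom, postExp, marg, mul_assoc] using
    (integral_sub_mean_sq_mul_div hint0 hint1 hint2 hpos.ne').symm

/-- The derivative of the posterior mean of log x with respect to the
continuously extended observation equals the posterior variance of log x. -/
theorem poisson_posterior_mean_deriv_eq_variance (px : ℝ → ℝ)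
    (hnn : ∀ x ∈ Set.Ioi (0:ℝ), 0 ≤ px x)
    (y : ℝ) (hy : -1 < y)
    (hpos : 0 < marg px y)
    (hint0 : IntegrableOn (fun x => plik x y * px x) (Set.Ioi 0))
    (hint1 : IntegrableOn (fun x => Real.log x * plik x y * px x) (Set.Ioi 0))
    (hint2 : IntegrableOn (fun x => (Real.log x) ^ 2 * plik x y * px x) (Set.Ioi 0))
    -- differentiation under the integral sign for the marginal:
    (hmargD : HasDerivAt (marg px)
      (∫ x in Set.Ioi (0:ℝ), (Real.log x - digamma (y + 1)) * plik x y * px x) y)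
    -- differentiation under the integral sign for the numerator:
    (hND : HasDerivAt (fun t => ∫ x in Set.Ioi (0:ℝ), Real.log x * plik x t * px x)
      (∫ x in Set.Ioi (0:ℝ),
        Real.log x * (Real.log x - digamma (y + 1)) * plik x y * px x) y) :
    HasDerivAt (postExp px Real.log)
      (postExp px (fun x => (Real.log x) ^ 2) y - (postExp px Real.log y) ^ 2) y ∧
    postExp px (fun x => (Real.log x) ^ 2) y - (postExp px Real.log y) ^ 2
      = cmom px 2 y :=
  poisson_posterior_mean_deriv_eq_variance_general px y hpos hint0 hint1 hint2 hmargD hND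
end

section
/- For the Poisson model, the derivative of the posterior variance of η = log x equals the posterior third central moment: d/dy μ₂(y) = μ₃(y), where μ_k(y) = E[(log x − μ₁(y))^k | y]. -/
open MeasureTheory Set

/-!
Write `w_s(x) = plik x s * px x` and `μ₁ = postExp px log`. Then `cmom px 2 = N / marg px` with
`N(s) = ∫ (log x - μ₁ s)² w_s`. Since `∂ₛ plik x s = (log x - ψ(s + 1)) plik x s`, differentiating
under the integral gives `N' = ∫ (log x - μ₁)³ w + (μ₁ - ψ) ∫ (log x - μ₁)² w`; the term coming from
`μ₁'` multiplies the centred first moment and vanishes. Likewise `marg' = (μ₁ - ψ) marg`, and in the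
quotient rule the two `(μ₁ - ψ)` terms cancel, leaving `μ₃`.
-/

section WeightedMoments

variable {α : Type*} [MeasurableSpace α] {μ : Measure α} {L w : α → ℝ}

theorem integrable_pow_mul_of_abs_pow_mul {k : ℕ} (hL : AEStronglyMeasurable L μ)
    (hw : AEStronglyMeasurable w μ) (h : Integrable (fun x => |L x| ^ k * w x) μ) :
    Integrable (fun x => L x ^ k * w x) μ :=
  h.mono ((hL.pow k).mul hw) (ae_of_all _ fun x => by simp)

theorem integrable_sub_pow_mul_of_forall_abs_pow_mul (hL : AEStronglyMeasurable L μ)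
    (h : ∀ k : ℕ, Integrable (fun x => |L x| ^ k * w x) μ) (a : ℝ) (n : ℕ) :
    Integrable (fun x => (L x - a) ^ n * w x) μ := by
  have hw : AEStronglyMeasurable w μ := by simpa using (h 0).aestronglyMeasurable
  have hexpand : (fun x => (L x - a) ^ n * w x) = fun x => ∑ m ∈ Finset.range (n + 1),
      ((-1) ^ (m + n) * a ^ (n - m) * n.choose m) * (L x ^ m * w x) := by
    funext x
    rw [sub_pow, Finset.sum_mul]
    exact Finset.sum_congr rfl fun m _ => by ring
  rw [hexpand]
  exact integrable_finsetSum _ fun m _ =>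
    (integrable_pow_mul_of_abs_pow_mul hL hw (h m)).const_mul _

end WeightedMoments

theorem hasDerivAt_Gamma_of_pos {t : ℝ} (ht : 0 < t) :
    HasDerivAt Real.Gamma (digamma t * Real.Gamma t) t := by
  have hdiff : DifferentiableAt ℝ Real.Gamma t := by
    refine Real.differentiableAt_Gamma fun m hm => ?_
    have : (0 : ℝ) ≤ m := m.cast_nonneg
    linarith
  have hlog := hdiff.hasDerivAt.log (Real.Gamma_pos_of_pos ht).ne'
  rw [digamma, hlog.deriv, div_mul_cancel₀ _ (Real.Gamma_pos_of_pos ht).ne']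
  exact hdiff.hasDerivAt

theorem hasDerivAt_plik {x y : ℝ} (hx : 0 < x) (hy : -1 < y) :
    HasDerivAt (plik x) ((Real.log x - digamma (y + 1)) * plik x y) y := by
  have hΓ : Real.Gamma (y + 1) ≠ 0 := (Real.Gamma_pos_of_pos (by linarith)).ne'
  have hden : HasDerivAt (fun s => Real.Gamma (s + 1))
      (digamma (y + 1) * Real.Gamma (y + 1)) y :=
    (hasDerivAt_Gamma_of_pos (by linarith)).comp_add_const y 1
  have hnum : HasDerivAt (fun s => x ^ s * Real.exp (-x)) (x ^ y * Real.log x * Real.exp (-x)) y :=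
    (Real.hasStrictDerivAt_const_rpow hx y).hasDerivAt.mul_const _
  refine (hnum.div hden hΓ).congr_deriv ?_
  rw [plik]
  field_simp

theorem hasDerivAt_sub_sq_mul_plik {px m : ℝ → ℝ} {x y v : ℝ} (hx : 0 < x) (hy : -1 < y)
    (hm : HasDerivAt m v y) :
    HasDerivAt (fun s => (Real.log x - m s) ^ 2 * plik x s * px x)
      ((Real.log x - m y) ^ 3 * plik x y * px x
        + (m y - digamma (y + 1)) * ((Real.log x - m y) ^ 2 * plik x y * px x)
        - 2 * v * ((Real.log x - m y) * plik x y * px x)) y := by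
  refine ((((hm.const_sub (Real.log x)).fun_pow 2).mul (hasDerivAt_plik hx hy)).mul_const
    (px x)).congr_deriv ?_
  push_cast
  ring

section Posterior

variable {px : ℝ → ℝ} {y : ℝ}

theorem integrableOn_log_sub_pow_mul_plik
    (hint : ∀ k : ℕ, IntegrableOn (fun x => |Real.log x| ^ k * plik x y * px x) (Ioi 0))
    (a : ℝ) (n : ℕ) :
    IntegrableOn (fun x => (Real.log x - a) ^ n * plik x y * px x) (Ioi 0) := by
  simpa only [mul_assoc, IntegrableOn] using
    integrable_sub_pow_mul_of_forall_abs_pow_mul Real.measurable_log.aestronglyMeasurable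
      (fun k => by simpa only [mul_assoc, IntegrableOn] using hint k) a n

theorem integral_log_sub_mul_plik (hm : marg px y ≠ 0)
    (hint : ∀ k : ℕ, IntegrableOn (fun x => |Real.log x| ^ k * plik x y * px x) (Ioi 0))
    (a : ℝ) :
    ∫ x in Ioi (0 : ℝ), (Real.log x - a) * plik x y * px x
      = (postExp px Real.log y - a) * marg px y := by
  have hL : IntegrableOn (fun x => Real.log x * plik x y * px x) (Ioi 0) := by
    simpa only [sub_zero, pow_one] using integrableOn_log_sub_pow_mul_plik hint 0 1
  have h1 : IntegrableOn (fun x => plik x y * px x) (Ioi 0) := by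
    simpa only [pow_zero, one_mul] using integrableOn_log_sub_pow_mul_plik hint 0 0
  have hsplit : (fun x => (Real.log x - a) * plik x y * px x)
      = fun x => Real.log x * plik x y * px x - a * (plik x y * px x) := by
    funext x; ring
  rw [hsplit, integral_sub hL (h1.const_mul a), integral_const_mul, postExp, sub_mul,
    div_mul_cancel₀ _ hm, marg]

theorem integral_log_sub_postExp_pow_mul_plik (hm : marg px y ≠ 0) (k : ℕ) :
    ∫ x in Ioi (0 : ℝ), (Real.log x - postExp px Real.log y) ^ k * plik x y * px x
      = cmom px k y * marg px y := by
  rw [cmom, div_mul_cancel₀ _ hm]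

theorem integral_deriv_log_sub_postExp_sq_mul_plik {v : ℝ} (hy : -1 < y) (hm : marg px y ≠ 0)
    (hint : ∀ k : ℕ, IntegrableOn (fun x => |Real.log x| ^ k * plik x y * px x) (Ioi 0))
    (hμ₁ : HasDerivAt (postExp px Real.log) v y) :
    ∫ x in Ioi (0 : ℝ),
        deriv (fun s => (Real.log x - postExp px Real.log s) ^ 2 * plik x s * px x) y
      = (cmom px 3 y + (postExp px Real.log y - digamma (y + 1)) * cmom px 2 y) * marg px y := by
  set μ₁ := postExp px Real.log y
  have hI : ∀ n : ℕ, IntegrableOn (fun x => (Real.log x - μ₁) ^ n * plik x y * px x) (Ioi 0) :=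
    integrableOn_log_sub_pow_mul_plik hint μ₁
  have hcentred : ∫ x in Ioi (0 : ℝ), (Real.log x - μ₁) * plik x y * px x = 0 := by
    rw [integral_log_sub_mul_plik hm hint, sub_self, zero_mul]
  rw [setIntegral_congr_fun measurableSet_Ioi
      fun x hx => (hasDerivAt_sub_sq_mul_plik hx hy hμ₁).deriv,
    integral_sub ((hI 3).fun_add ((hI 2).const_mul _))
      (by simpa only [pow_one] using (hI 1).const_mul (2 * v)),
    integral_add (hI 3) ((hI 2).const_mul _), integral_const_mul, integral_const_mul, hcentred,
    integral_log_sub_postExp_pow_mul_plik hm, integral_log_sub_postExp_pow_mul_plik hm]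
  ring

end Posterior

theorem poisson_variance_deriv_eq_third_moment_general (px : ℝ → ℝ)
    (y : ℝ) (hy : -1 < y)
    (hpos : 0 < marg px y)
    (hint : ∀ k : ℕ, IntegrableOn (fun x => |Real.log x| ^ k * plik x y * px x) (Set.Ioi 0))
    -- differentiation under the integral sign for the marginal:
    (hmargD : HasDerivAt (marg px)
      (∫ x in Set.Ioi (0:ℝ), (Real.log x - digamma (y + 1)) * plik x y * px x) y)
    -- Tweedie consequence: the posterior mean of log x has derivative mu_2:
    (hmu1D : HasDerivAt (postExp px Real.log) (cmom px 2 y) y)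
    -- differentiation under the integral sign for the centered second moment:
    (hDUI : HasDerivAt
      (fun s => ∫ x in Set.Ioi (0:ℝ),
        (Real.log x - postExp px Real.log s) ^ 2 * plik x s * px x)
      (∫ x in Set.Ioi (0:ℝ),
        deriv (fun s => (Real.log x - postExp px Real.log s) ^ 2 * plik x s * px x) y) y) :
    HasDerivAt (cmom px 2) (cmom px 3 y) y := by
  have hm : marg px y ≠ 0 := hpos.ne'
  rw [integral_log_sub_mul_plik hm hint] at hmargD
  rw [integral_deriv_log_sub_postExp_sq_mul_plik hy hm hint hmu1D] at hDUI
  refine (hDUI.div hmargD hm).congr_deriv ?_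
  rw [integral_log_sub_postExp_pow_mul_plik hm]
  field_simp
  ring

/-- The derivative of the posterior variance of log x equals the posterior
third central moment: d/dy mu_2(y) = mu_3(y). -/
theorem poisson_variance_deriv_eq_third_moment (px : ℝ → ℝ)
    (hnn : ∀ x ∈ Set.Ioi (0:ℝ), 0 ≤ px x)
    (y : ℝ) (hy : -1 < y)
    (hpos : 0 < marg px y)
    (hint : ∀ k : ℕ, IntegrableOn (fun x => |Real.log x| ^ k * plik x y * px x) (Set.Ioi 0))
    -- differentiation under the integral sign for the marginal:
    (hmargD : HasDerivAt (marg px)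
      (∫ x in Set.Ioi (0:ℝ), (Real.log x - digamma (y + 1)) * plik x y * px x) y)
    -- Tweedie consequence: the posterior mean of log x has derivative mu_2:
    (hmu1D : HasDerivAt (postExp px Real.log) (cmom px 2 y) y)
    -- differentiation under the integral sign for the centered second moment:
    (hDUI : HasDerivAt
      (fun s => ∫ x in Set.Ioi (0:ℝ),
        (Real.log x - postExp px Real.log s) ^ 2 * plik x s * px x)
      (∫ x in Set.Ioi (0:ℝ),
        deriv (fun s => (Real.log x - postExp px Real.log s) ^ 2 * plik x s * px x) y) y) :
    HasDerivAt (cmom px 2) (cmom px 3 y) y :=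
  poisson_variance_deriv_eq_third_moment_general px y hy hpos hint hmargD hmu1D hDUI
end

section
/- In the Gaussian case with y = x + n, n ~ N(0, σ²I), Tweedie's formula gives E[x|y] = y + σ² ∇_y log p_y(y); in the Poisson case the analogous identity holds for the canonical parameter η = log x rather than x itself: E[log x | y] = ψ(y+1) + d/dy log p_y(y). As a corollary, in the Poisson model d/dy E[log x|y] − ψ'(y+1) = d²/dy² log p_y(y). -/
open MeasureTheory Set

/-- trigamma function (derivative of digamma) -/
noncomputable def trigamma (t : ℝ) : ℝ := deriv digamma t

/-- Gaussian kernel for noise variance sigma^2 -/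
noncomputable def gaussK (σ t x : ℝ) : ℝ :=
  Real.exp (-(t - x) ^ 2 / (2 * σ ^ 2)) / Real.sqrt (2 * Real.pi * σ ^ 2)

/-- Gaussian marginal density -/
noncomputable def gmarg (σ : ℝ) (q : ℝ → ℝ) (t : ℝ) : ℝ := ∫ x : ℝ, gaussK σ t x * q x

/-!
Both formulas are instances of one identity for exponential families. If the likelihood
`k(t, x)` has score `∂ₜ log k(t, x) = T(x) - A'(t)`, then differentiating the marginal
`m(t) = ∫ k(t, x) p(x) dx` under the integral sign gives `m'(t) = ∫ (T x - A'(t)) k p`, so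
`(log m)'(t) = E[T | t] - A'(t)`. For the Gaussian kernel `T(x) = x / σ²`, `A'(t) = t / σ²`;
for the Poisson likelihood `T(x) = log x` (the canonical parameter), `A'(t) = ψ(t + 1)`.
Differentiating the Poisson identity once more in `t` gives the corollary.
-/

section ScoreIdentity

variable {α : Type*} [MeasurableSpace α] {μ : Measure α}

theorem integral_sub_const_mul_mul {T k p : α → ℝ}
    (hT : Integrable (fun x => T x * k x * p x) μ) (hkp : Integrable (fun x => k x * p x) μ)
    (c : ℝ) :
    ∫ x, (T x - c) * k x * p x ∂μ = ∫ x, T x * k x * p x ∂μ - c * ∫ x, k x * p x ∂μ := by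
  rw [← integral_const_mul, ← integral_sub hT (hkp.const_mul c)]
  congr 1 with x
  ring

theorem hasDerivAt_log_of_hasDerivAt_integral_score {m : ℝ → ℝ} {T k p : α → ℝ} {t c : ℝ}
    (hm : m t = ∫ x, k x * p x ∂μ) (hm0 : m t ≠ 0)
    (hT : Integrable (fun x => T x * k x * p x) μ)
    (hD : HasDerivAt m (∫ x, (T x - c) * k x * p x ∂μ) t) :
    HasDerivAt (fun s => Real.log (m s)) ((∫ x, T x * k x * p x ∂μ) / m t - c) t := by
  have hkp : Integrable (fun x => k x * p x) μ := Integrable.of_integral_ne_zero (hm ▸ hm0)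
  convert hD.log hm0 using 1
  rw [integral_sub_const_mul_mul hT hkp, ← hm, sub_div, mul_div_cancel_right₀ _ hm0]

end ScoreIdentity

theorem gaussian_tweedie {σ yg : ℝ} {q : ℝ → ℝ} (hσ : σ ≠ 0) (hm0 : gmarg σ q yg ≠ 0)
    (hint : Integrable (fun x => x * gaussK σ yg x * q x))
    (hD : HasDerivAt (gmarg σ q) (∫ x : ℝ, ((x - yg) / σ ^ 2) * gaussK σ yg x * q x) yg) :
    (∫ x : ℝ, x * gaussK σ yg x * q x) / gmarg σ q yg
      = yg + σ ^ 2 * deriv (fun t => Real.log (gmarg σ q t)) yg := by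
  have hT : Integrable (fun x => x / σ ^ 2 * gaussK σ yg x * q x) := by
    convert hint.div_const (σ ^ 2) using 2 with x
    ring
  simp_rw [sub_div] at hD
  rw [(hasDerivAt_log_of_hasDerivAt_integral_score rfl hm0 hT hD).deriv]
  have hσ2 : σ ^ 2 ≠ 0 := pow_ne_zero 2 hσ
  have hscale : ∫ x, x / σ ^ 2 * gaussK σ yg x * q x = (∫ x, x * gaussK σ yg x * q x) / σ ^ 2 := by
    rw [← integral_div]
    congr 1 with x
    ring
  rw [hscale]
  field_simp
  ring

theorem poisson_hasDerivAt_log_marg {px : ℝ → ℝ} {t : ℝ} (hpos : 0 < marg px t)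
    (hint : IntegrableOn (fun x => Real.log x * plik x t * px x) (Ioi 0))
    (hD : HasDerivAt (marg px)
      (∫ x in Ioi (0:ℝ), (Real.log x - digamma (t + 1)) * plik x t * px x) t) :
    HasDerivAt (fun s => Real.log (marg px s)) (postExp px Real.log t - digamma (t + 1)) t :=
  hasDerivAt_log_of_hasDerivAt_integral_score rfl hpos.ne' hint hD

theorem deriv_sub_eq_deriv_deriv_of_eventually_hasDerivAt {f E g : ℝ → ℝ} {y : ℝ}
    (hf : ∀ᶠ t in nhds y, HasDerivAt f (E t - g t) t)
    (hE : DifferentiableAt ℝ E y) (hg : DifferentiableAt ℝ g y) :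
    deriv E y - deriv g y = deriv (deriv f) y := by
  have hderiv : deriv f =ᶠ[nhds y] fun t => E t - g t := hf.mono fun t ht => ht.deriv
  rw [hderiv.deriv_eq, deriv_fun_sub hE hg]

theorem tweedie_gaussian_and_poisson_general
    -- Gaussian setting
    (σ : ℝ) (hσ : 0 < σ) (q : ℝ → ℝ)
    (yg : ℝ) (hgpos : 0 < gmarg σ q yg)
    (hgint : Integrable (fun x => x * gaussK σ yg x * q x))
    -- differentiation under the integral sign for the Gaussian marginal:
    (hgD : HasDerivAt (gmarg σ q)
      (∫ x : ℝ, ((x - yg) / σ ^ 2) * gaussK σ yg x * q x) yg)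
    -- Poisson setting
    (px : ℝ → ℝ)
    (y : ℝ) (hy : -1 < y)
    (hpos : ∀ t : ℝ, -1 < t → 0 < marg px t)
    (hint : ∀ t : ℝ, -1 < t →
      IntegrableOn (fun x => Real.log x * plik x t * px x) (Set.Ioi 0))
    -- differentiation under the integral sign for the Poisson marginal:
    (hmargD : ∀ t : ℝ, -1 < t → HasDerivAt (marg px)
      (∫ x in Set.Ioi (0:ℝ), (Real.log x - digamma (t + 1)) * plik x t * px x) t)
    -- regularity for the corollary:
    (hmu1D : DifferentiableAt ℝ (postExp px Real.log) y)
    (hψD : DifferentiableAt ℝ digamma (y + 1)) :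
    -- Gaussian Tweedie formula
    (∫ x : ℝ, x * gaussK σ yg x * q x) / gmarg σ q yg
      = yg + σ ^ 2 * deriv (fun t => Real.log (gmarg σ q t)) yg ∧
    -- Poisson Tweedie formula in the canonical (log) domain
    postExp px Real.log y
      = digamma (y + 1) + deriv (fun t => Real.log (marg px t)) y ∧
    -- corollary: second-derivative identity in the Poisson model
    deriv (postExp px Real.log) y - trigamma (y + 1)
      = deriv (deriv (fun t => Real.log (marg px t))) y := by
  have hlogD : ∀ t, -1 < t → HasDerivAt (fun s => Real.log (marg px s))
      (postExp px Real.log t - digamma (t + 1)) t := fun t ht =>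
    poisson_hasDerivAt_log_marg (hpos t ht) (hint t ht) (hmargD t ht)
  refine ⟨gaussian_tweedie hσ.ne' hgpos.ne' hgint hgD, ?_, ?_⟩
  · rw [(hlogD y hy).deriv]
    ring
  · have hψshift : DifferentiableAt ℝ (fun t => digamma (t + 1)) y :=
      differentiableAt_comp_add_const.mpr hψD
    rw [trigamma, ← deriv_comp_add_const]
    exact deriv_sub_eq_deriv_deriv_of_eventually_hasDerivAt
      (eventually_gt_nhds hy |>.mono hlogD) hmu1D hψshift

/-- Tweedie's formula: in the Gaussian case `E[x|y] = y + σ² (log p_y)'(y)`;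
in the Poisson case the analogous identity holds for the canonical parameter
`η = log x`: `E[log x|y] = ψ(y+1) + (log p_y)'(y)`.  As a corollary, in the
Poisson model `(E[log x|·])'(y) − ψ'(y+1) = (log p_y)''(y)`. -/
theorem tweedie_gaussian_and_poisson
    -- Gaussian setting
    (σ : ℝ) (hσ : 0 < σ) (q : ℝ → ℝ)
    (hq : ∀ x : ℝ, 0 ≤ q x)
    (yg : ℝ) (hgpos : 0 < gmarg σ q yg)
    (hgint : Integrable (fun x => x * gaussK σ yg x * q x))
    -- differentiation under the integral sign for the Gaussian marginal:
    (hgD : HasDerivAt (gmarg σ q)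
      (∫ x : ℝ, ((x - yg) / σ ^ 2) * gaussK σ yg x * q x) yg)
    -- Poisson setting
    (px : ℝ → ℝ) (hnn : ∀ x ∈ Set.Ioi (0:ℝ), 0 ≤ px x)
    (y : ℝ) (hy : -1 < y)
    (hpos : ∀ t : ℝ, -1 < t → 0 < marg px t)
    (hint : ∀ t : ℝ, -1 < t →
      IntegrableOn (fun x => Real.log x * plik x t * px x) (Set.Ioi 0))
    -- differentiation under the integral sign for the Poisson marginal:
    (hmargD : ∀ t : ℝ, -1 < t → HasDerivAt (marg px)
      (∫ x in Set.Ioi (0:ℝ), (Real.log x - digamma (t + 1)) * plik x t * px x) t)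
    -- regularity for the corollary:
    (hmu1D : DifferentiableAt ℝ (postExp px Real.log) y)
    (hψD : DifferentiableAt ℝ digamma (y + 1)) :
    -- Gaussian Tweedie formula
    (∫ x : ℝ, x * gaussK σ yg x * q x) / gmarg σ q yg
      = yg + σ ^ 2 * deriv (fun t => Real.log (gmarg σ q t)) yg ∧
    -- Poisson Tweedie formula in the canonical (log) domain
    postExp px Real.log y
      = digamma (y + 1) + deriv (fun t => Real.log (marg px t)) y ∧
    -- corollary: second-derivative identity in the Poisson model
    deriv (postExp px Real.log) y - trigamma (y + 1)
      = deriv (deriv (fun t => Real.log (marg px t))) y :=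
  tweedie_gaussian_and_poisson_general σ hσ q yg hgpos hgint hgD px y hy hpos hint hmargD hmu1D hψD
end

section
/- Combining the first two moment identities: the posterior variance of log x in the Poisson model equals ψ'(y+1) + d²/dy² log p_y(y), where ψ' is the trigamma function; in particular, since variance is nonnegative, d²/dy² log p_y(y) ≥ −ψ'(y+1) for all y. -/
open MeasureTheory Set

/-!
Since `∂_t plik x t = (log x - ψ(t+1)) plik x t`, the score of the marginal is
`(log p_y)' = E[log x | y] - ψ(y+1)`. Write `E[log x | y] = N/p_y` with
`N(y) = ∫ log x · plik x y · p_x(x) dx`; in the quotient rule for `(N/p_y)'` the `ψ(y+1)` terms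
of `N'` and `p_y'` cancel, leaving `E[(log x)² | y] - E[log x | y]²`, while `ψ(y+1)` contributes
`-ψ'(y+1)`. The inequality is the nonnegativity of that variance.

No moment of `log x` needs to be assumed integrable: `|log x| ≤ (x^δ + x^(-δ))/δ` dominates
`|log x| plik x t` by the likelihoods at `t ± δ`, whose integrands against the prior are
integrable because their integrals, the marginals, are nonzero. Smoothness of `ψ` comes from
holomorphy of `Γ`.
-/

lemma contDiffOn_Gamma_Ioi (n : WithTop ℕ∞) : ContDiffOn ℝ n Real.Gamma (Ioi 0) := by
  have hD : DifferentiableOn ℂ Complex.Gamma {s : ℂ | 0 < s.re} := fun s hs =>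
    (Complex.differentiableAt_Gamma s fun m h => by
      have hs' : (0 : ℝ) < s.re := hs
      simp only [h, Complex.neg_re, Complex.natCast_re] at hs'
      linarith [m.cast_nonneg (α := ℝ)]).differentiableWithinAt
  have hR := Complex.reCLM.contDiff.comp_contDiffOn
    (((hD.contDiffOn (n := n) (isOpen_lt continuous_const Complex.continuous_re)).restrict_scalars
      ℝ).comp Complex.ofRealCLM.contDiff.contDiffOn fun x (hx : 0 < x) => by simpa using hx)
  refine hR.congr fun x _ => ?_
  simp [Complex.Gamma_ofReal]

lemma differentiableAt_digamma {s : ℝ} (hs : 0 < s) : DifferentiableAt ℝ digamma s := by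
  have h : ContDiffOn ℝ 2 (fun t => Real.log (Real.Gamma t)) (Ioi 0) :=
    (contDiffOn_Gamma_Ioi 2).log fun t ht => (Real.Gamma_pos_of_pos ht).ne'
  exact ((h.deriv_of_isOpen isOpen_Ioi (by norm_num) : ContDiffOn ℝ 1 _ _).differentiableOn
    one_ne_zero).differentiableAt (Ioi_mem_nhds hs)

lemma abs_log_le_rpow_add_rpow_neg_div {x δ : ℝ} (hx : 0 < x) (hδ : 0 < δ) :
    |Real.log x| ≤ (x ^ δ + x ^ (-δ)) / δ := by
  have hpos : 0 ≤ x ^ δ / δ := by positivity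
  have hneg : 0 ≤ x ^ (-δ) / δ := by positivity
  rcases le_total 0 (Real.log x) with h | h
  · rw [abs_of_nonneg h, add_div]
    linarith [Real.log_le_rpow_div hx.le hδ]
  · have := Real.log_le_rpow_div (inv_nonneg.2 hx.le) hδ
    rw [Real.log_inv, Real.inv_rpow hx.le, ← Real.rpow_neg hx.le] at this
    rw [abs_of_nonpos h, add_div]
    linarith

lemma plik_pos {x t : ℝ} (hx : 0 < x) (ht : -1 < t) : 0 < plik x t := by
  have := Real.Gamma_pos_of_pos (by linarith : 0 < t + 1)
  unfold plik
  positivity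

lemma abs_log_mul_plik_le {x t δ : ℝ} (hx : 0 < x) (hδ : 0 < δ) (ht : -1 < t - δ) :
    |Real.log x| * plik x t ≤
      Real.Gamma (t + δ + 1) / (δ * Real.Gamma (t + 1)) * plik x (t + δ) +
        Real.Gamma (t - δ + 1) / (δ * Real.Gamma (t + 1)) * plik x (t - δ) := by
  have hΓ := Real.Gamma_pos_of_pos (by linarith : 0 < t + 1)
  have hΓ_add := Real.Gamma_pos_of_pos (by linarith : 0 < t + δ + 1)
  have hΓ_sub := Real.Gamma_pos_of_pos (by linarith : 0 < t - δ + 1)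
  calc |Real.log x| * plik x t ≤ (x ^ δ + x ^ (-δ)) / δ * plik x t :=
        mul_le_mul_of_nonneg_right (abs_log_le_rpow_add_rpow_neg_div hx hδ)
          (plik_pos hx (by linarith)).le
    _ = _ := by
        simp only [plik, Real.rpow_add hx, Real.rpow_sub hx, Real.rpow_neg hx.le]
        field_simp

lemma integrableOn_abs_log_mul_plik_mul {g : ℝ → ℝ} (hg : ∀ x ∈ Ioi (0 : ℝ), 0 ≤ g x)
    {t δ : ℝ} (hδ : 0 < δ) (ht : -1 < t - δ)
    (hmeas : AEStronglyMeasurable (fun x => plik x t * g x) (volume.restrict (Ioi 0)))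
    (hadd : IntegrableOn (fun x => plik x (t + δ) * g x) (Ioi 0))
    (hsub : IntegrableOn (fun x => plik x (t - δ) * g x) (Ioi 0)) :
    IntegrableOn (fun x => |Real.log x| * (plik x t * g x)) (Ioi 0) := by
  refine ((hadd.const_mul (Real.Gamma (t + δ + 1) / (δ * Real.Gamma (t + 1)))).add
    (hsub.const_mul (Real.Gamma (t - δ + 1) / (δ * Real.Gamma (t + 1))))).mono'
    (Real.measurable_log.aestronglyMeasurable.norm.mul hmeas) ?_
  rw [ae_restrict_iff' measurableSet_Ioi]
  refine ae_of_all _ fun x (hx : 0 < x) => ?_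
  have hplik := (plik_pos hx (by linarith : -1 < t)).le
  rw [Real.norm_eq_abs, abs_of_nonneg (mul_nonneg (abs_nonneg _) (mul_nonneg hplik (hg x hx)))]
  calc |Real.log x| * (plik x t * g x) = |Real.log x| * plik x t * g x := by ring
    _ ≤ _ := mul_le_mul_of_nonneg_right (abs_log_mul_plik_le hx hδ ht) (hg x hx)
    _ = _ := by simp only [Pi.add_apply]; ring

lemma integrableOn_plik_mul_of_marg_ne_zero {px : ℝ → ℝ} {t : ℝ} (h : marg px t ≠ 0) :
    IntegrableOn (fun x => plik x t * px x) (Ioi 0) :=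
  Integrable.of_integral_ne_zero h

lemma integrableOn_log_mul_of_abs {s : Set ℝ} {f : ℝ → ℝ}
    (hf : AEStronglyMeasurable f (volume.restrict s))
    (h : IntegrableOn (fun x => |Real.log x| * f x) s) :
    IntegrableOn (fun x => Real.log x * f x) s :=
  Integrable.mono h (Real.measurable_log.aestronglyMeasurable.mul hf)
    (ae_of_all _ fun x => by simp only [norm_mul, Real.norm_eq_abs, abs_abs, le_refl])

lemma integrableOn_abs_log_mul_plik_mul_of_marg_pos {px : ℝ → ℝ}
    (hnn : ∀ x ∈ Ioi (0 : ℝ), 0 ≤ px x) (hpos : ∀ t : ℝ, -1 < t → 0 < marg px t)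
    {t : ℝ} (ht : -1 < t) :
    IntegrableOn (fun x => |Real.log x| * (plik x t * px x)) (Ioi 0) :=
  integrableOn_abs_log_mul_plik_mul hnn (δ := (t + 1) / 2) (by linarith) (by linarith)
    (integrableOn_plik_mul_of_marg_ne_zero (hpos t ht).ne').aestronglyMeasurable
    (integrableOn_plik_mul_of_marg_ne_zero (hpos _ (by linarith)).ne')
    (integrableOn_plik_mul_of_marg_ne_zero (hpos _ (by linarith)).ne')

lemma integrableOn_log_mul_plik_mul_of_marg_pos {px : ℝ → ℝ}
    (hnn : ∀ x ∈ Ioi (0 : ℝ), 0 ≤ px x) (hpos : ∀ t : ℝ, -1 < t → 0 < marg px t)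
    {t : ℝ} (ht : -1 < t) :
    IntegrableOn (fun x => Real.log x * plik x t * px x) (Ioi 0) := by
  simp only [mul_assoc]
  exact integrableOn_log_mul_of_abs
    (integrableOn_plik_mul_of_marg_ne_zero (hpos t ht).ne').aestronglyMeasurable
    (integrableOn_abs_log_mul_plik_mul_of_marg_pos hnn hpos ht)

lemma integrableOn_log_sq_mul_plik_mul_of_marg_pos {px : ℝ → ℝ}
    (hnn : ∀ x ∈ Ioi (0 : ℝ), 0 ≤ px x) (hpos : ∀ t : ℝ, -1 < t → 0 < marg px t)
    {t : ℝ} (ht : -1 < t) :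
    IntegrableOn (fun x => Real.log x ^ 2 * plik x t * px x) (Ioi 0) := by
  have hcomm : ∀ s, (fun x => plik x s * (|Real.log x| * px x)) =
      fun x => |Real.log x| * (plik x s * px x) := fun s => by funext x; ring
  have hsq : (fun x => Real.log x ^ 2 * plik x t * px x) =
      fun x => |Real.log x| * (plik x t * (|Real.log x| * px x)) := by
    funext x
    rw [← sq_abs]
    ring
  rw [hsq]
  refine integrableOn_abs_log_mul_plik_mul (δ := (t + 1) / 2)
    (fun x hx => mul_nonneg (abs_nonneg _) (hnn x hx)) (by linarith) (by linarith) ?_ ?_ ?_ <;>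
    rw [hcomm]
  · exact (integrableOn_abs_log_mul_plik_mul_of_marg_pos hnn hpos ht).aestronglyMeasurable
  all_goals exact integrableOn_abs_log_mul_plik_mul_of_marg_pos hnn hpos (by linarith)

lemma setIntegral_weighted_variance_nonneg {s : Set ℝ} (hs : MeasurableSet s) {f w : ℝ → ℝ}
    (hw : ∀ x ∈ s, 0 ≤ w x) (hW : 0 < ∫ x in s, w x) (h0 : IntegrableOn w s)
    (h1 : IntegrableOn (fun x => f x * w x) s) (h2 : IntegrableOn (fun x => f x ^ 2 * w x) s) :
    0 ≤ (∫ x in s, f x ^ 2 * w x) / (∫ x in s, w x) -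
      ((∫ x in s, f x * w x) / ∫ x in s, w x) ^ 2 := by
  set m := (∫ x in s, f x * w x) / ∫ x in s, w x
  have hsq : 0 ≤ ∫ x in s, (f x - m) ^ 2 * w x :=
    setIntegral_nonneg hs fun x hx => mul_nonneg (sq_nonneg _) (hw x hx)
  have hexpand : ∫ x in s, (f x - m) ^ 2 * w x =
      (∫ x in s, f x ^ 2 * w x) - 2 * m * (∫ x in s, f x * w x) + m ^ 2 * ∫ x in s, w x := by
    have hfun : (fun x => (f x - m) ^ 2 * w x) =
        fun x => f x ^ 2 * w x - 2 * m * (f x * w x) + m ^ 2 * w x := by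
      funext x; ring
    have h21 : IntegrableOn (fun x => f x ^ 2 * w x - 2 * m * (f x * w x)) s :=
      h2.sub (h1.const_mul _)
    rw [hfun, integral_add h21 (h0.const_mul _),
      integral_sub h2 (h1.const_mul _), integral_const_mul, integral_const_mul]
  have hm : (∫ x in s, f x * w x) = m * ∫ x in s, w x := (div_mul_cancel₀ _ hW.ne').symm
  rw [hexpand, hm] at hsq
  rw [sub_nonneg, le_div_iff₀ hW]
  nlinarith

lemma postExp_sq_sub_sq_nonneg {px f : ℝ → ℝ} {t : ℝ} (hnn : ∀ x ∈ Ioi (0 : ℝ), 0 ≤ px x)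
    (ht : -1 < t) (hM : 0 < marg px t)
    (h1 : IntegrableOn (fun x => f x * plik x t * px x) (Ioi 0))
    (h2 : IntegrableOn (fun x => f x ^ 2 * plik x t * px x) (Ioi 0)) :
    0 ≤ postExp px (fun x => f x ^ 2) t - postExp px f t ^ 2 := by
  simp only [mul_assoc] at h1 h2
  simpa only [postExp, marg, mul_assoc] using
    setIntegral_weighted_variance_nonneg measurableSet_Ioi
      (fun x hx => mul_nonneg (plik_pos hx ht).le (hnn x hx)) hM
      (integrableOn_plik_mul_of_marg_ne_zero hM.ne') h1 h2

lemma setIntegral_eq_sub_const_mul {s : Set ℝ} {f g h : ℝ → ℝ} (hf : IntegrableOn f s)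
    (hg : IntegrableOn g s) (c : ℝ) (hfg : ∀ x, h x = f x - c * g x) :
    ∫ x in s, h x = (∫ x in s, f x) - c * ∫ x in s, g x := by
  simp only [hfg]
  rw [integral_sub hf (hg.const_mul c), integral_const_mul]

lemma deriv_log_marg {px : ℝ → ℝ} {t c : ℝ} (hM : marg px t ≠ 0)
    (hMd : HasDerivAt (marg px) (∫ x in Ioi (0 : ℝ), (Real.log x - c) * plik x t * px x) t)
    (h1 : IntegrableOn (fun x => Real.log x * plik x t * px x) (Ioi 0)) :
    deriv (fun s => Real.log (marg px s)) t = postExp px Real.log t - c := by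
  have hsplit : ∫ x in Ioi (0 : ℝ), (Real.log x - c) * plik x t * px x =
      (∫ x in Ioi (0 : ℝ), Real.log x * plik x t * px x) - c * marg px t :=
    setIntegral_eq_sub_const_mul h1 (integrableOn_plik_mul_of_marg_ne_zero hM) c fun x => by ring
  rw [(hMd.log hM).deriv, hsplit, postExp]
  field_simp

lemma hasDerivAt_postExp_log {px : ℝ → ℝ} {t c : ℝ} (hM : marg px t ≠ 0)
    (hMd : HasDerivAt (marg px) (∫ x in Ioi (0 : ℝ), (Real.log x - c) * plik x t * px x) t)
    (hNd : HasDerivAt (fun s => ∫ x in Ioi (0 : ℝ), Real.log x * plik x s * px x)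
      (∫ x in Ioi (0 : ℝ), Real.log x * (Real.log x - c) * plik x t * px x) t)
    (h1 : IntegrableOn (fun x => Real.log x * plik x t * px x) (Ioi 0))
    (h2 : IntegrableOn (fun x => Real.log x ^ 2 * plik x t * px x) (Ioi 0)) :
    HasDerivAt (postExp px Real.log)
      (postExp px (fun x => Real.log x ^ 2) t - postExp px Real.log t ^ 2) t := by
  have hsplitM : ∫ x in Ioi (0 : ℝ), (Real.log x - c) * plik x t * px x =
      (∫ x in Ioi (0 : ℝ), Real.log x * plik x t * px x) - c * marg px t :=
    setIntegral_eq_sub_const_mul h1 (integrableOn_plik_mul_of_marg_ne_zero hM) c fun x => by ring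
  have hsplitN : ∫ x in Ioi (0 : ℝ), Real.log x * (Real.log x - c) * plik x t * px x =
      (∫ x in Ioi (0 : ℝ), Real.log x ^ 2 * plik x t * px x) -
        c * ∫ x in Ioi (0 : ℝ), Real.log x * plik x t * px x :=
    setIntegral_eq_sub_const_mul h2 h1 c fun x => by ring
  refine (hNd.div hMd hM).congr_deriv ?_
  rw [hsplitM, hsplitN, postExp, postExp]
  field_simp
  ring

theorem poisson_posterior_variance_trigamma_general (px : ℝ → ℝ)
    (hnn : ∀ x ∈ Set.Ioi (0:ℝ), 0 ≤ px x)
    (y : ℝ) (hy : -1 < y)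
    (hpos : ∀ t : ℝ, -1 < t → 0 < marg px t)
    -- differentiation under the integral sign for the marginal, at every point:
    (hmargD : ∀ t : ℝ, -1 < t → HasDerivAt (marg px)
      (∫ x in Set.Ioi (0:ℝ), (Real.log x - digamma (t + 1)) * plik x t * px x) t)
    -- differentiation under the integral sign for the numerator of mu_1:
    (hND : ∀ t : ℝ, -1 < t →
      HasDerivAt (fun s => ∫ x in Set.Ioi (0:ℝ), Real.log x * plik x s * px x)
      (∫ x in Set.Ioi (0:ℝ),
        Real.log x * (Real.log x - digamma (t + 1)) * plik x t * px x) t) :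
    postExp px (fun x => (Real.log x) ^ 2) y - (postExp px Real.log y) ^ 2
      = trigamma (y + 1) + deriv (deriv (fun t => Real.log (marg px t))) y ∧
    deriv (deriv (fun t => Real.log (marg px t))) y ≥ -trigamma (y + 1) := by
  have h1 := integrableOn_log_mul_plik_mul_of_marg_pos hnn hpos hy
  have h2 := integrableOn_log_sq_mul_plik_mul_of_marg_pos hnn hpos hy
  have hfirst : deriv (fun t => Real.log (marg px t)) =ᶠ[nhds y]
      fun t => postExp px Real.log t - digamma (t + 1) := by
    filter_upwards [Ioi_mem_nhds hy] with t ht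
    exact deriv_log_marg (hpos t ht).ne' (hmargD t ht)
      (integrableOn_log_mul_plik_mul_of_marg_pos hnn hpos ht)
  have hsecond : deriv (deriv (fun t => Real.log (marg px t))) y =
      (postExp px (fun x => Real.log x ^ 2) y - postExp px Real.log y ^ 2) - trigamma (y + 1) :=
    hfirst.deriv_eq.trans <|
      ((hasDerivAt_postExp_log (hpos y hy).ne' (hmargD y hy) (hND y hy) h1 h2).sub
        ((differentiableAt_digamma (by linarith)).hasDerivAt.comp_add_const y 1)).deriv
  have hvar := postExp_sq_sub_sq_nonneg hnn hy (hpos y hy) h1 h2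
  constructor <;> linarith

/-- The posterior variance of log x in the Poisson model equals
trigamma(y+1) + (log p_y)''(y); in particular (log p_y)''(y) >= -trigamma(y+1). -/
theorem poisson_posterior_variance_trigamma (px : ℝ → ℝ)
    (hnn : ∀ x ∈ Set.Ioi (0:ℝ), 0 ≤ px x)
    (y : ℝ) (hy : -1 < y)
    (hpos : ∀ t : ℝ, -1 < t → 0 < marg px t)
    (hint0 : IntegrableOn (fun x => plik x y * px x) (Set.Ioi 0))
    (hint1 : IntegrableOn (fun x => Real.log x * plik x y * px x) (Set.Ioi 0))
    (hint2 : IntegrableOn (fun x => (Real.log x) ^ 2 * plik x y * px x) (Set.Ioi 0))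
    -- differentiation under the integral sign for the marginal, at every point:
    (hmargD : ∀ t : ℝ, -1 < t → HasDerivAt (marg px)
      (∫ x in Set.Ioi (0:ℝ), (Real.log x - digamma (t + 1)) * plik x t * px x) t)
    -- differentiation under the integral sign for the numerator of mu_1:
    (hND : ∀ t : ℝ, -1 < t →
      HasDerivAt (fun s => ∫ x in Set.Ioi (0:ℝ), Real.log x * plik x s * px x)
      (∫ x in Set.Ioi (0:ℝ),
        Real.log x * (Real.log x - digamma (t + 1)) * plik x t * px x) t)
    -- second differentiation of the log-marginal is valid:
    (h2 : DifferentiableAt ℝ (deriv (fun t => Real.log (marg px t))) y)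
    (hψ : DifferentiableAt ℝ digamma (y + 1)) :
    postExp px (fun x => (Real.log x) ^ 2) y - (postExp px Real.log y) ^ 2
      = trigamma (y + 1) + deriv (deriv (fun t => Real.log (marg px t))) y ∧
    deriv (deriv (fun t => Real.log (marg px t))) y ≥ -trigamma (y + 1) :=
  poisson_posterior_variance_trigamma_general px hnn y hy hpos hmargD hND
end
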